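/- If W ⊢ ¬βⱼ for some justification βⱼ of a default δ ∈ D, then δ is never a generating default: for every extension E of (W,D), δ ∉ GD(W,D,E), and moreover (W,D) and (W, D \ {δ}) have exactly the same extensions. -/

import Mathlib

/-- Propositional formulas over natural-number atoms. -/
inductive PForm where
  | atom : ℕ → PForm
  | neg : PForm → PForm
  | conj : PForm → PForm → PForm
  | disj : PForm → PForm → PForm
deriving DecidableEq

/-- Satisfaction of a formula under a valuation. -/
def PForm.sat (v : ℕ → Prop) : PForm → Prop
  | .atom n => v n
  | .neg f => ¬ f.sat v
  | .conj f g => f.sat v ∧ g.sat v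
  | .disj f g => f.sat v ∨ g.sat v

/-- Propositional deductive closure (semantic consequence). -/
def Th (S : Set PForm) : Set PForm :=
  {φ | ∀ v : ℕ → Prop, (∀ ψ ∈ S, ψ.sat v) → φ.sat v}

/-- Propositional entailment `S ⊢ φ`. -/
def Entails (S : Set PForm) (φ : PForm) : Prop := φ ∈ Th S

/-- A default rule (α : β₁,…,βₙ / γ). -/
structure DRule where
  prereq : PForm
  justifs : List PForm
  conseq : PForm

/-- Consequents of a set of defaults. -/
def Conseq (Δ : Set DRule) : Set PForm := DRule.conseq '' Δ

/-- The defining properties of Γ(S): `T` contains `W`, is deductively closed,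
and is closed under defaults applicable w.r.t. `S`. -/
def GammaClosed (W : Set PForm) (D : Set DRule) (S T : Set PForm) : Prop :=
  W ⊆ T ∧ Th T = T ∧
  ∀ δ ∈ D, δ.prereq ∈ T → (∀ β ∈ δ.justifs, PForm.neg β ∉ S) → δ.conseq ∈ T

/-- Γ(S): the smallest set satisfying `GammaClosed`. -/
def Gamma (W : Set PForm) (D : Set DRule) (S : Set PForm) : Set PForm :=
  ⋂₀ {T | GammaClosed W D S T}

/-- Reiter extension: fixed point of Γ. -/
def IsExtension (W : Set PForm) (D : Set DRule) (E : Set PForm) : Prop :=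
  Gamma W D E = E

/-- Generating default set of `E`. -/
def GD (W : Set PForm) (D : Set DRule) (E : Set PForm) : Set DRule :=
  {δ ∈ D | δ.prereq ∈ E ∧ ∀ β ∈ δ.justifs, PForm.neg β ∉ E}

/-- Groundedness of a (finite) set of defaults. -/
def Grounded (W : Set PForm) (Δ : Set DRule) : Prop :=
  ∃ L : List DRule, L.Nodup ∧ {δ | δ ∈ L} = Δ ∧
    ∀ i (h : i < L.length),
      Entails (W ∪ Conseq {δ | δ ∈ L.take i}) (L.get ⟨i, h⟩).prereq

/-!
Every extension is closed under `Th` and contains `W`, hence contains `¬β`, so `δ` is never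
applicable relative to an extension. Relative to any `S` containing `¬β`, the closure conditions
defining `Γ(S)` for `D` and for `D \ {δ}` coincide, so both theories have the same `Γ` there.
-/

theorem gammaClosed_gamma (W : Set PForm) (D : Set DRule) (S : Set PForm) :
    GammaClosed W D S (Gamma W D S) := by
  refine ⟨fun φ hφ T hT => hT.1 hφ, ?_, ?_⟩
  · refine Set.Subset.antisymm (fun φ hφ T hT => ?_) (fun φ hφ v hv => hv φ hφ)
    have hsub : Gamma W D S ⊆ T := Set.sInter_subset_of_mem hT
    rw [← hT.2.1]
    exact fun v hv => hφ v fun ψ hψ => hv ψ (hsub hψ)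
  · exact fun d hd hpre hj T hT => hT.2.2 d hd (hpre T hT) hj

theorem IsExtension.gammaClosed {W : Set PForm} {D : Set DRule} {E : Set PForm}
    (h : IsExtension W D E) : GammaClosed W D E E := by
  have hΓ := gammaClosed_gamma W D E
  rwa [show Gamma W D E = E from h] at hΓ

theorem GammaClosed.mem_of_entails {W : Set PForm} {D : Set DRule} {S T : Set PForm}
    {φ : PForm} (hT : GammaClosed W D S T) (hφ : Entails W φ) : φ ∈ T := by
  rw [← hT.2.1]
  exact fun v hv => hφ v fun ψ hψ => hv ψ (hT.1 hψ)

theorem gammaClosed_diff_singleton_iff {W : Set PForm} {D : Set DRule} {S T : Set PForm}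
    {δ : DRule} {β : PForm} (hβ : β ∈ δ.justifs) (hS : PForm.neg β ∈ S) :
    GammaClosed W (D \ {δ}) S T ↔ GammaClosed W D S T := by
  refine ⟨fun ⟨hW, hTh, hD⟩ => ⟨hW, hTh, fun d hd hpre hj => ?_⟩,
    fun ⟨hW, hTh, hD⟩ => ⟨hW, hTh, fun d hd => hD d hd.1⟩⟩
  obtain rfl | hdδ := eq_or_ne d δ
  · exact absurd hS (hj β hβ)
  · exact hD d ⟨hd, hdδ⟩ hpre hj

theorem gamma_diff_singleton {W : Set PForm} {D : Set DRule} {S : Set PForm}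
    {δ : DRule} {β : PForm} (hβ : β ∈ δ.justifs) (hS : PForm.neg β ∈ S) :
    Gamma W (D \ {δ}) S = Gamma W D S := by
  simp only [Gamma, gammaClosed_diff_singleton_iff hβ hS]

theorem blocked_default_removable_general
    (W : Set PForm) (D : Set DRule) (δ : DRule)
    (hblocked : ∃ β ∈ δ.justifs, Entails W (PForm.neg β)) :
    (∀ E : Set PForm, IsExtension W D E → δ ∉ GD W D E) ∧
    (∀ E : Set PForm, IsExtension W D E ↔ IsExtension W (D \ {δ}) E) := by
  obtain ⟨β, hβ, hent⟩ := hblocked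
  have hneg : ∀ {D' : Set DRule} {E : Set PForm}, IsExtension W D' E → PForm.neg β ∈ E :=
    fun hE => hE.gammaClosed.mem_of_entails hent
  refine ⟨fun E hE hGD => hGD.2.2 β hβ (hneg hE), fun E => ⟨fun hE => ?_, fun hE => ?_⟩⟩
  · rwa [IsExtension, gamma_diff_singleton hβ (hneg hE)]
  · rwa [IsExtension, ← gamma_diff_singleton hβ (hneg hE)]

theorem blocked_default_removable
    (W : Set PForm) (D : Set DRule) (δ : DRule) (hδ : δ ∈ D)
    (hblocked : ∃ β ∈ δ.justifs, Entails W (PForm.neg β)) :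
    (∀ E : Set PForm, IsExtension W D E → δ ∉ GD W D E) ∧
    (∀ E : Set PForm, IsExtension W D E ↔ IsExtension W (D \ {δ}) E) :=
  blocked_default_removable_general W D δ hblocked
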